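/- Let (S, A, H, P, μ) be a finite episodic MDP, π⁺ a deterministic target policy, and ε > 0. Define the white-box combined-attack MDP M̄' with step-dependent rewards r̄_h(s,a) = μ(s,a) if a = π⁺_h(s) and r̄_h(s,a) = μ(s, π⁺_h(s)) − ε otherwise, and step-dependent transitions P̄_h(s,a) = P(s, π⁺_h(s)) for every a. Then: (i) for every deterministic policy π, every step h ∈ {1,…,H}, and every state s, V̄^π_h(s) ≤ V̄^{π⁺}_h(s), and for every a ≠ π⁺_h(s), Q̄^π_h(s,a) ≤ Q̄^{π⁺}_h(s, π⁺_h(s)) − ε (so if π_h(s) ≠ π⁺_h(s) then V̄^π_h(s) ≤ V̄^{π⁺}_h(s) − ε); and (ii) if additionally μ(s,a) ∈ (0,1] for all (s,a) and ε ≤ min_{h,s} μ(s, π⁺_h(s)), then every modified reward r̄_h(s,a) lies in [0,1]. -/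
import Mathlib


open scoped BigOperators

namespace RLAttack

variable {S A : Type*} [Fintype S] [Fintype A]

/-- Expectation of `f` under a `PMF` on a finite type. -/
noncomputable def expVal (p : PMF S) (f : S → ℝ) : ℝ :=
  ∑ s' : S, (p s').toReal * f s'

/-- Auxiliary backward-induction value: `n` steps remaining, current step `h`. -/
noncomputable def valAux (r : ℕ → S → A → ℝ) (P : ℕ → S → A → PMF S)
    (π : ℕ → S → A) : ℕ → ℕ → S → ℝ
  | 0, _, _ => 0
  | n + 1, h, s => r h s (π h s) + expVal (P h s (π h s)) (valAux r P π n (h + 1))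

/-- Value function `V^π_h(s)` for horizon `H`: `V^π_{H+1} = 0` and
`V^π_h(s) = r_h(s, π_h(s)) + E_{s' ~ P_h(s, π_h(s))}[V^π_{h+1}(s')]`. -/
noncomputable def V (H : ℕ) (r : ℕ → S → A → ℝ) (P : ℕ → S → A → PMF S)
    (π : ℕ → S → A) (h : ℕ) (s : S) : ℝ :=
  valAux r P π (H + 1 - h) h s

/-- Q-value function `Q^π_h(s,a) = r_h(s,a) + E_{s' ~ P_h(s,a)}[V^π_{h+1}(s')]`. -/
noncomputable def Q (H : ℕ) (r : ℕ → S → A → ℝ) (P : ℕ → S → A → PMF S)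
    (π : ℕ → S → A) (h : ℕ) (s : S) (a : A) : ℝ :=
  r h s a + expVal (P h s a) (fun s' => V H r P π (h + 1) s')



/-- White-box combined-attack rewards:
`r̄_h(s,a) = μ(s,a)` if `a = π⁺_h(s)`, else `μ(s, π⁺_h(s)) − ε`. -/
noncomputable def rWB' [DecidableEq A] (μ : S → A → ℝ) (πp : ℕ → S → A) (ε : ℝ) :
    ℕ → S → A → ℝ :=
  fun h s a => if a = πp h s then μ s a else μ s (πp h s) - ε

/-- Combined-attack transitions: `P̄_h(s,a) = P(s, π⁺_h(s))` for every `a`. -/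
noncomputable def PComb (P : S → A → PMF S) (πp : ℕ → S → A) :
    ℕ → S → A → PMF S :=
  fun h s _ => P s (πp h s)

lemma expVal_mono (p : PMF S) {f g : S → ℝ} (hfg : ∀ s, f s ≤ g s) :
    expVal p f ≤ expVal p g := by
  refine Finset.sum_le_sum fun s _ => ?_
  exact mul_le_mul_of_nonneg_left (hfg s) ENNReal.toReal_nonneg

lemma rWB'_le [DecidableEq A] (μ : S → A → ℝ) (πp : ℕ → S → A) {ε : ℝ} (hε : 0 < ε)
    (h : ℕ) (s : S) (a : A) : rWB' μ πp ε h s a ≤ μ s (πp h s) := by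
  unfold rWB'
  split
  · next heq => subst heq; exact le_refl _
  · linarith

lemma valAux_mono [DecidableEq A] (P : S → A → PMF S) (μ : S → A → ℝ)
    (πp : ℕ → S → A) {ε : ℝ} (hε : 0 < ε) (π : ℕ → S → A) :
    ∀ n h s, valAux (rWB' μ πp ε) (PComb P πp) π n h s
      ≤ valAux (rWB' μ πp ε) (PComb P πp) πp n h s := by
  intro n
  induction n with
  | zero => intro h s; simp [valAux]
  | succ n ih =>
    intro h s
    simp only [valAux]
    have h1 : rWB' μ πp ε h s (π h s) ≤ rWB' μ πp ε h s (πp h s) := by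
      have := rWB'_le μ πp hε h s (π h s)
      simpa [rWB'] using this
    have h2 : expVal ((PComb P πp) h s (π h s))
        (valAux (rWB' μ πp ε) (PComb P πp) π n (h + 1))
        ≤ expVal ((PComb P πp) h s (πp h s))
        (valAux (rWB' μ πp ε) (PComb P πp) πp n (h + 1)) := by
      simp only [PComb]
      exact expVal_mono _ fun s' => ih (h + 1) s'
    linarith

/-- In the white-box combined-attack MDP `M̄'`: (i) `π⁺` weakly dominates
every policy, every non-target action is `ε`-suboptimal in `Q̄`-value (so disagreeing values
are at least `ε` smaller); and (ii) if `μ(s,a) ∈ (0,1]` everywhere and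
`ε ≤ min_{h,s} μ(s, π⁺_h(s))`, then every modified reward lies in `[0,1]`. -/
theorem statement14 {S A : Type*} [Fintype S] [Fintype A] [Nonempty S] [Nonempty A]
    [DecidableEq A]
    (H : ℕ) (hH : 1 ≤ H) (P : S → A → PMF S) (μ : S → A → ℝ)
    (πp : ℕ → S → A) (ε : ℝ) (hε : 0 < ε) :
    (∀ π : ℕ → S → A, ∀ h ∈ Finset.Icc 1 H, ∀ s : S,
      V H (rWB' μ πp ε) (PComb P πp) π h s ≤ V H (rWB' μ πp ε) (PComb P πp) πp h s ∧
      (∀ a : A, a ≠ πp h s →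
        Q H (rWB' μ πp ε) (PComb P πp) π h s a
          ≤ Q H (rWB' μ πp ε) (PComb P πp) πp h s (πp h s) - ε) ∧
      (π h s ≠ πp h s →
        V H (rWB' μ πp ε) (PComb P πp) π h s
          ≤ V H (rWB' μ πp ε) (PComb P πp) πp h s - ε)) ∧
    ((∀ s a, μ s a ∈ Set.Ioc (0 : ℝ) 1) →
      (∀ h ∈ Finset.Icc 1 H, ∀ s : S, ε ≤ μ s (πp h s)) →
      ∀ h ∈ Finset.Icc 1 H, ∀ s : S, ∀ a : A,
        rWB' μ πp ε h s a ∈ Set.Icc (0 : ℝ) 1) := by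
  constructor
  · intro π h hh s
    simp only [Finset.mem_Icc] at hh
    have hVle : ∀ h' s', V H (rWB' μ πp ε) (PComb P πp) π h' s'
        ≤ V H (rWB' μ πp ε) (PComb P πp) πp h' s' :=
      fun h' s' => valAux_mono P μ πp hε π _ h' s'
    have hQ : ∀ a : A, a ≠ πp h s →
        Q H (rWB' μ πp ε) (PComb P πp) π h s a
          ≤ Q H (rWB' μ πp ε) (PComb P πp) πp h s (πp h s) - ε := by
      intro a ha
      simp only [Q]
      have hr : rWB' μ πp ε h s a = μ s (πp h s) - ε := by simp [rWB', ha]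
      have hr' : rWB' μ πp ε h s (πp h s) = μ s (πp h s) := by simp [rWB']
      have hexp : expVal ((PComb P πp) h s a)
          (fun s' => V H (rWB' μ πp ε) (PComb P πp) π (h + 1) s')
          ≤ expVal ((PComb P πp) h s (πp h s))
          (fun s' => V H (rWB' μ πp ε) (PComb P πp) πp (h + 1) s') := by
        simp only [PComb]
        exact expVal_mono _ fun s' => hVle (h + 1) s'
      rw [hr, hr']
      linarith
    refine ⟨hVle h s, hQ, fun hne => ?_⟩
    have hVQ : ∀ ρ : ℕ → S → A, V H (rWB' μ πp ε) (PComb P πp) ρ h s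
        = Q H (rWB' μ πp ε) (PComb P πp) ρ h s (ρ h s) := by
      intro ρ
      have hn : H + 1 - h = (H - h) + 1 := by omega
      have hn' : H + 1 - (h + 1) = H - h := by omega
      simp only [V, Q, hn, hn', valAux]
    rw [hVQ π, hVQ πp]
    exact hQ (π h s) hne
  · intro hμ hεμ h hh s a
    have h1 := hμ s a
    have h2 := hμ s (πp h s)
    have h3 := hεμ h hh s
    simp only [Set.mem_Ioc] at h1 h2
    unfold rWB'
    split
    · exact ⟨le_of_lt h1.1, h1.2⟩
    · constructor <;> [linarith; linarith]

end RLAttack
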